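/- arXiv:1201.3016 — 4 statements merged into one kernel-verified Lean document; each statement's English description precedes it below -/
import Mathlib

section
/- A T-quasigroup x·y = φx + ψy + c over a finite abelian group (Q,+) is orthogonal to its (23)-parastrophe if and only if the map 1 + ψ (i.e. x ↦ x + ψx) is a bijection of Q. -/
/-!
Applying ψ to the second equation of the system `x·y = a`, `x (23)· y = b` gives
`-φx + y - c = ψb`; adding the first equation eliminates `x`, leaving `y + ψy = a + ψb`,
after which `x = φ⁻¹(a - ψy - c)` is forced. So the system has a unique solution for every
`(a, b)` exactly when every `t = a + ψb` has a unique preimage under `1 + ψ`.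
-/

theorem existsUnique_prod_and_fst_eq_iff {α β : Type*} (P : β → Prop) (g : β → α) :
    (∃! p : α × β, P p.2 ∧ p.1 = g p.2) ↔ ∃! y, P y := by
  constructor
  · rintro ⟨⟨x, y⟩, ⟨hy, -⟩, huniq⟩
    exact ⟨y, hy, fun y' hy' => congrArg Prod.snd (huniq (g y', y') ⟨hy', rfl⟩)⟩
  · rintro ⟨y, hy, huniq⟩
    refine ⟨(g y, y), ⟨hy, rfl⟩, ?_⟩
    rintro ⟨x', y'⟩ ⟨hy', hx'⟩
    obtain rfl : y' = y := huniq y' hy'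
    exact Prod.ext hx' rfl

theorem tQuasigroup_parastrophe23_system_iff {Q : Type*} [AddCommGroup Q]
    (φ ψ : AddAut Q) (c x y a b : Q) :
    (φ x + ψ y + c = a ∧ -((-ψ) (φ x)) + (-ψ) y - (-ψ) c = b) ↔
      (y + ψ y = a + ψ b ∧ x = (-φ) (a - ψ y - c)) := by
  have hld : -((-ψ) (φ x)) + (-ψ) y - (-ψ) c = b ↔ -φ x + y - c = ψ b := by
    rw [← (ψ : Q ≃+ Q).injective.eq_iff]
    simp only [map_add, map_neg, map_sub, AddAut.apply_neg_self]
  have hx : x = (-φ) (a - ψ y - c) ↔ φ x = a - ψ y - c := by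
    rw [← (φ : Q ≃+ Q).injective.eq_iff]
    simp only [AddAut.apply_neg_self]
  rw [hld, hx]
  constructor
  · rintro ⟨rfl, h⟩
    refine ⟨?_, by abel⟩
    rw [← h]
    abel
  · rintro ⟨hy, hφ⟩
    refine ⟨by rw [hφ]; abel, ?_⟩
    rw [hφ, ← add_right_inj a, ← hy]
    abel

theorem T_quasigroup_orth_23_iff_general {Q : Type*} [AddCommGroup Q]
    (φ ψ : AddAut Q) (c : Q)
    (mul ld : Q → Q → Q)
    (hmul : ∀ x y : Q, mul x y = φ x + ψ y + c)
    (hld : ∀ x y : Q, ld x y = -((-ψ) (φ x)) + (-ψ) y - (-ψ) c) :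
    (∀ a b : Q, ∃! p : Q × Q, mul p.1 p.2 = a ∧ ld p.1 p.2 = b) ↔
      Function.Bijective (fun x : Q => x + ψ x) := by
  have hsystem (a b : Q) :
      (∃! p : Q × Q, mul p.1 p.2 = a ∧ ld p.1 p.2 = b) ↔ ∃! y, y + ψ y = a + ψ b := by
    simp only [hmul, hld, tQuasigroup_parastrophe23_system_iff]
    exact existsUnique_prod_and_fst_eq_iff (fun y => y + ψ y = a + ψ b)
      fun y => (-φ) (a - ψ y - c)
  simp only [hsystem, Function.bijective_iff_existsUnique]
  constructor
  · intro h t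
    simpa using h t 0
  · intro h a b
    exact h (a + ψ b)

/-- A T-quasigroup x·y = φx + ψy + c over a finite abelian group is orthogonal
to its (23)-parastrophe iff the map x ↦ x + ψx is a bijection of Q. -/
theorem T_quasigroup_orth_23_iff {Q : Type*} [AddCommGroup Q] [Fintype Q]
    (φ ψ : AddAut Q) (c : Q)
    (mul ld : Q → Q → Q)
    (hmul : ∀ x y : Q, mul x y = φ x + ψ y + c)
    (hld : ∀ x y : Q, ld x y = -((-ψ) (φ x)) + (-ψ) y - (-ψ) c) :
    (∀ a b : Q, ∃! p : Q × Q, mul p.1 p.2 = a ∧ ld p.1 p.2 = b) ↔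
      Function.Bijective (fun x : Q => x + ψ x) :=
  T_quasigroup_orth_23_iff_general φ ψ c mul ld hmul hld
end

section
/- A T-quasigroup x·y = φx + ψy + c over a finite abelian group (Q,+) is orthogonal to its (12)-parastrophe x∘y = ψx + φy + c if and only if both φ - ψ and φ + ψ are bijections of Q. -/
/-- A T-quasigroup x·y = φx + ψy + c over a finite abelian group is orthogonal
to its (12)-parastrophe x∘y = ψx + φy + c iff both φ - ψ and φ + ψ are
bijections of Q. -/
theorem T_quasigroup_orth_12_iff {Q : Type*} [AddCommGroup Q] [Fintype Q]
    (φ ψ : AddAut Q) (c : Q)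
    (mul op : Q → Q → Q)
    (hmul : ∀ x y : Q, mul x y = φ x + ψ y + c)
    (hop : ∀ x y : Q, op x y = ψ x + φ y + c) :
    (∀ a b : Q, ∃! p : Q × Q, mul p.1 p.2 = a ∧ op p.1 p.2 = b) ↔
      (Function.Bijective (fun x : Q => φ x - ψ x) ∧
        Function.Bijective (fun x : Q => φ x + ψ x)) := by
  set F : Q × Q → Q × Q := fun p => (mul p.1 p.2, op p.1 p.2) with hF
  have hFb : (∀ a b : Q, ∃! p : Q × Q, mul p.1 p.2 = a ∧ op p.1 p.2 = b) ↔
      Function.Bijective F := by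
    rw [Function.bijective_iff_existsUnique]
    constructor
    · intro h q
      obtain ⟨p, hp, hu⟩ := h q.1 q.2
      exact ⟨p, Prod.ext hp.1 hp.2,
        fun y hy => hu y ⟨congrArg Prod.fst hy, congrArg Prod.snd hy⟩⟩
    · intro h a b
      obtain ⟨p, hp, hu⟩ := h (a, b)
      exact ⟨p, ⟨congrArg Prod.fst hp, congrArg Prod.snd hp⟩,
        fun y hy => hu y (Prod.ext hy.1 hy.2)⟩
  rw [hFb, ← Finite.injective_iff_bijective, ← Finite.injective_iff_bijective,
      ← Finite.injective_iff_bijective]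
  constructor
  · intro h
    constructor
    · intro x1 x2 he
      simp only at he
      have he2 : ψ x1 - φ x1 = ψ x2 - φ x2 := by
        rw [← neg_sub (φ x1), ← neg_sub (φ x2), he]
      have key : F (x1, -x1) = F (x2, -x2) := by
        simp only [hF, hmul, hop, map_neg, ← sub_eq_add_neg]
        rw [he, he2]
      exact congrArg Prod.fst (h key)
    · intro x1 x2 he
      simp only at he
      have he2 : ψ x1 + φ x1 = ψ x2 + φ x2 := by
        rw [add_comm, he, add_comm]
      have key : F (x1, x1) = F (x2, x2) := by
        simp only [hF, hmul, hop]
        rw [he, he2]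
      exact congrArg Prod.fst (h key)
  · rintro ⟨h1, h2⟩ ⟨x1, y1⟩ ⟨x2, y2⟩ he
    simp only [hF, hmul, hop, Prod.mk.injEq] at he
    obtain ⟨e1, e2⟩ := he
    have e1' : φ x1 + ψ y1 = φ x2 + ψ y2 := add_right_cancel e1
    have e2' : ψ x1 + φ y1 = ψ x2 + φ y2 := add_right_cancel e2
    have hsum : (fun x : Q => φ x + ψ x) (x1 + y1) = (fun x : Q => φ x + ψ x) (x2 + y2) := by
      have h12 : (φ x1 + ψ y1) + (ψ x1 + φ y1) = (φ x2 + ψ y2) + (ψ x2 + φ y2) := by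
        rw [e1', e2']
      simp only [map_add]
      abel_nf at h12 ⊢
      exact h12
    have hxy : x1 + y1 = x2 + y2 := h2 hsum
    have h3 : φ x1 - φ x2 = ψ y2 - ψ y1 := by
      rw [sub_eq_sub_iff_add_eq_add, add_comm (ψ y2)]
      exact e1'
    have h4 : y2 - y1 = x1 - x2 := by
      rw [sub_eq_sub_iff_add_eq_add, hxy, add_comm]
    have h5 : φ (x1 - x2) = ψ (x1 - x2) := by
      rw [map_sub, h3, ← map_sub, h4]
    have hdiff : (fun x : Q => φ x - ψ x) (x1 - x2) = (fun x : Q => φ x - ψ x) 0 := by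
      show φ (x1 - x2) - ψ (x1 - x2) = φ 0 - ψ 0
      rw [h5, sub_self, map_zero, map_zero, sub_self]
    have hx : x1 = x2 := sub_eq_zero.mp (h1 hdiff)
    refine Prod.ext hx ?_
    show y1 = y2
    rw [hx] at hxy
    exact add_left_cancel hxy
end

section
/- Two T-quasigroups x·y = αx + βy + c and x∘y = γx + δy + d over the same abelian group (Q,+) (with α,β,γ,δ automorphisms) are orthogonal if and only if α^{-1}β - γ^{-1}δ is an automorphism (bijective endomorphism) of (Q,+). -/
/-! Writing `x·y = α (x + α⁻¹β y) + c` and `x∘y = γ ((x + α⁻¹β y) - (α⁻¹β - γ⁻¹δ) y) + d`, the map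
`(x, y) ↦ (x·y, x∘y)` is a bijection of `Q × Q` composed with the shear
`(x, y) ↦ (x + α⁻¹β y, (α⁻¹β - γ⁻¹δ) y)`, and such a shear is bijective exactly when its second
component is. -/

open Function

def Orthogonal {X Y Z W : Type*} (A : X → Y → Z) (B : X → Y → W) : Prop :=
  ∀ a b, ∃! p : X × Y, A p.1 p.2 = a ∧ B p.1 p.2 = b

theorem orthogonal_iff_bijective {X Y Z W : Type*} (A : X → Y → Z) (B : X → Y → W) :
    Orthogonal A B ↔ Bijective fun p : X × Y => (A p.1 p.2, B p.1 p.2) := by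
  simp only [Orthogonal, bijective_iff_existsUnique, Prod.forall, Prod.ext_iff]

theorem Prod.map_id_bijective_iff {α β γ : Type*} [Nonempty α] {g : β → γ} :
    Bijective (Prod.map (id : α → α) g) ↔ Bijective g := by
  obtain ⟨a⟩ := ‹Nonempty α›
  refine ⟨fun h => ⟨fun b₁ b₂ hb => ?_, fun k => ?_⟩, bijective_id.prodMap⟩
  · exact congrArg Prod.snd <| h.injective (a₁ := (a, b₁)) (a₂ := (a, b₂)) (Prod.ext rfl hb)
  · obtain ⟨p, hp⟩ := h.surjective (a, k)
    exact ⟨p.2, (Prod.ext_iff.mp hp).2⟩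

theorem bijective_shear_iff {G H K : Type*} [AddGroup G] (f : H → G) (g : H → K) :
    Bijective (fun p : G × H => (p.1 + f p.2, g p.2)) ↔ Bijective g := by
  let e : G × H ≃ G × H :=
    { toFun p := (p.1 + f p.2, p.2)
      invFun p := (p.1 - f p.2, p.2)
      left_inv p := by simp
      right_inv p := by simp }
  calc Bijective (fun p : G × H => (p.1 + f p.2, g p.2))
      ↔ Bijective (Prod.map id g ∘ e) := Iff.rfl
    _ ↔ Bijective g := by
      rw [Equiv.bijective_comp, Prod.map_id_bijective_iff]

section TQuasigroup

variable {Q : Type*} [AddCommGroup Q] (α β γ δ : AddAut Q) (c d : Q)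

def affineShearEquiv : Q × Q ≃ Q × Q :=
  (Equiv.prodShear (Equiv.refl Q) Equiv.subLeft).trans
    ((α.toEquiv.trans (Equiv.addRight c)).prodCongr (γ.toEquiv.trans (Equiv.addRight d)))

theorem affineShearEquiv_apply (p : Q × Q) :
    affineShearEquiv α γ c d p = (α p.1 + c, γ (p.1 - p.2) + d) :=
  rfl

theorem affine_pair_eq_comp_shear :
    (fun p : Q × Q => (α p.1 + β p.2 + c, γ p.1 + δ p.2 + d)) =
      affineShearEquiv α γ c d ∘
        fun p => (p.1 + (-α) (β p.2), (-α) (β p.2) - (-γ) (δ p.2)) := by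
  funext p
  ext <;> simp only [comp_apply, affineShearEquiv_apply, map_add, map_sub, AddAut.apply_neg_self]
  abel

end TQuasigroup

theorem T_quasigroups_orthogonal_iff_general {Q : Type*} [AddCommGroup Q]
    (α β γ δ : AddAut Q) (c d : Q)
    (A B : Q → Q → Q)
    (hA : ∀ x y : Q, A x y = α x + β y + c)
    (hB : ∀ x y : Q, B x y = γ x + δ y + d) :
    (∀ a b : Q, ∃! p : Q × Q, A p.1 p.2 = a ∧ B p.1 p.2 = b) ↔
      Function.Bijective (fun x : Q => (-α) (β x) - (-γ) (δ x)) := by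
  have hpair : (fun p : Q × Q => (A p.1 p.2, B p.1 p.2)) =
      fun p => (α p.1 + β p.2 + c, γ p.1 + δ p.2 + d) := by
    simp only [hA, hB]
  rw [← bijective_shear_iff fun y => (-α) (β y),
    ← Equiv.comp_bijective _ (affineShearEquiv α γ c d), ← affine_pair_eq_comp_shear, ← hpair]
  exact orthogonal_iff_bijective A B

/-- Two T-quasigroups x·y = αx + βy + c and x∘y = γx + δy + d over the same
finite abelian group are orthogonal iff α⁻¹β - γ⁻¹δ is a bijection of Q. -/
theorem T_quasigroups_orthogonal_iff {Q : Type*} [AddCommGroup Q] [Fintype Q]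
    (α β γ δ : AddAut Q) (c d : Q)
    (A B : Q → Q → Q)
    (hA : ∀ x y : Q, A x y = α x + β y + c)
    (hB : ∀ x y : Q, B x y = γ x + δ y + d) :
    (∀ a b : Q, ∃! p : Q × Q, A p.1 p.2 = a ∧ B p.1 p.2 = b) ↔
      Function.Bijective (fun x : Q => (-α) (β x) - (-γ) (δ x)) :=
  T_quasigroups_orthogonal_iff_general α β γ δ c d A B hA hB
end

section
/- Let p be a prime and k, m, c ∈ Z_p with k, m, k+m, k−m, k+1, m+1, k²+m, k+m² all nonzero mod p. Then the quasigroup x∘y = kx + my + c on Z_p is orthogonal to each of its five nontrivial parastrophes. -/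
/-- A nondegenerate affine 2×2 system over a field has a unique solution. -/
lemma lin_unique {F : Type*} [Field F] {k1 m1 c1 k2 m2 c2 : F}
    (hd : k1 * m2 - k2 * m1 ≠ 0) (f g : F → F → F)
    (hf : ∀ x y, f x y = k1 * x + m1 * y + c1)
    (hg : ∀ x y, g x y = k2 * x + m2 * y + c2) (a b : F) :
    ∃! q : F × F, f q.1 q.2 = a ∧ g q.1 q.2 = b := by
  set d := k1 * m2 - k2 * m1 with hdd
  refine ⟨((m2 * (a - c1) - m1 * (b - c2)) / d,
           (k1 * (b - c2) - k2 * (a - c1)) / d), ⟨?_, ?_⟩, ?_⟩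
  · rw [hf]; field_simp; ring
  · rw [hg]; field_simp; ring
  · rintro ⟨x, y⟩ ⟨h1, h2⟩
    rw [hf] at h1; rw [hg] at h2
    have hx : x = (m2 * (a - c1) - m1 * (b - c2)) / d := by
      field_simp
      linear_combination m2 * h1 - m1 * h2
    have hy : y = (k1 * (b - c2) - k2 * (a - c1)) / d := by
      field_simp
      linear_combination k1 * h2 - k2 * h1
    simp [hx, hy]

/-- Orthogonality of a linear quasigroup x∘y = kx + my + c over Z_p with each of
its five nontrivial parastrophes, under the nonvanishing conditions
k, m, k+m, k-m, k+1, m+1, k²+m, k+m² ≠ 0 (mod p). -/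
theorem Zp_quasigroup_orthogonal_parastrophes (p : ℕ) [Fact p.Prime]
    (k m c : ZMod p)
    (hk : k ≠ 0) (hm : m ≠ 0) (hkm : k + m ≠ 0) (hkm' : k - m ≠ 0)
    (hk1 : k + 1 ≠ 0) (hm1 : m + 1 ≠ 0) (hk2m : k ^ 2 + m ≠ 0)
    (hkm2 : k + m ^ 2 ≠ 0) :
    let mul : ZMod p → ZMod p → ZMod p := fun x y => k * x + m * y + c
    let p12 : ZMod p → ZMod p → ZMod p := fun x y => m * x + k * y + c
    let p13 : ZMod p → ZMod p → ZMod p :=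
      fun x y => k⁻¹ * x - k⁻¹ * m * y - k⁻¹ * c
    let p23 : ZMod p → ZMod p → ZMod p :=
      fun x y => -(m⁻¹ * k * x) + m⁻¹ * y - m⁻¹ * c
    let p123 : ZMod p → ZMod p → ZMod p :=
      fun x y => -(k⁻¹ * m * x) + k⁻¹ * y - k⁻¹ * c
    let p132 : ZMod p → ZMod p → ZMod p :=
      fun x y => m⁻¹ * x - m⁻¹ * k * y - m⁻¹ * c
    (∀ a b : ZMod p, ∃! q : ZMod p × ZMod p,
        mul q.1 q.2 = a ∧ p12 q.1 q.2 = b) ∧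
    (∀ a b : ZMod p, ∃! q : ZMod p × ZMod p,
        mul q.1 q.2 = a ∧ p13 q.1 q.2 = b) ∧
    (∀ a b : ZMod p, ∃! q : ZMod p × ZMod p,
        mul q.1 q.2 = a ∧ p23 q.1 q.2 = b) ∧
    (∀ a b : ZMod p, ∃! q : ZMod p × ZMod p,
        mul q.1 q.2 = a ∧ p123 q.1 q.2 = b) ∧
    (∀ a b : ZMod p, ∃! q : ZMod p × ZMod p,
        mul q.1 q.2 = a ∧ p132 q.1 q.2 = b) := by
  intro mul p12 p13 p23 p123 p132
  have hkinv : k⁻¹ ≠ 0 := inv_ne_zero hk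
  have hminv : m⁻¹ ≠ 0 := inv_ne_zero hm
  refine ⟨?_, ?_, ?_, ?_, ?_⟩
  · -- det = k*k - m*m = (k+m)(k-m)
    intro a b
    refine lin_unique (k1 := k) (m1 := m) (c1 := c) (k2 := m) (m2 := k) (c2 := c)
      ?_ mul p12 (fun x y => rfl) (fun x y => rfl) a b
    intro h
    apply mul_ne_zero hkm hkm'
    linear_combination h
  · -- det = k*(-k⁻¹*m) - k⁻¹*m = -k⁻¹*m*(k+1)
    intro a b
    refine lin_unique (k1 := k) (m1 := m) (c1 := c)
      (k2 := k⁻¹) (m2 := -(k⁻¹*m)) (c2 := -(k⁻¹*c))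
      ?_ mul p13 (fun x y => rfl) (fun x y => by show _ = _; ring) a b
    intro h
    apply mul_ne_zero (mul_ne_zero hkinv hm) hk1
    have hki : k * k⁻¹ = 1 := mul_inv_cancel₀ hk
    linear_combination -h
  · -- det = k*m⁻¹ + m⁻¹*k*m = m⁻¹*k*(1+m)
    intro a b
    refine lin_unique (k1 := k) (m1 := m) (c1 := c)
      (k2 := -(m⁻¹*k)) (m2 := m⁻¹) (c2 := -(m⁻¹*c))
      ?_ mul p23 (fun x y => rfl) (fun x y => by show _ = _; ring) a b
    intro h
    apply mul_ne_zero (mul_ne_zero hminv hk) hm1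
    have hmi : m * m⁻¹ = 1 := mul_inv_cancel₀ hm
    linear_combination h
  · -- det = k*k⁻¹ + k⁻¹*m*m = k⁻¹*(k+m²)
    intro a b
    refine lin_unique (k1 := k) (m1 := m) (c1 := c)
      (k2 := -(k⁻¹*m)) (m2 := k⁻¹) (c2 := -(k⁻¹*c))
      ?_ mul p123 (fun x y => rfl) (fun x y => by show _ = _; ring) a b
    intro h
    apply mul_ne_zero hkinv hkm2
    have hki : k * k⁻¹ = 1 := mul_inv_cancel₀ hk
    linear_combination h
  · -- det = -k*m⁻¹*k - m⁻¹*m = -m⁻¹*(k²+m)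
    intro a b
    refine lin_unique (k1 := k) (m1 := m) (c1 := c)
      (k2 := m⁻¹) (m2 := -(m⁻¹*k)) (c2 := -(m⁻¹*c))
      ?_ mul p132 (fun x y => rfl) (fun x y => by show _ = _; ring) a b
    intro h
    apply mul_ne_zero hminv hk2m
    have hmi : m * m⁻¹ = 1 := mul_inv_cancel₀ hm
    linear_combination -h
end
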